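/- Let Y be a locally compact Hausdorff space and let φ be a map from the nonnegative elements of C₀(Y) to [0,∞] such that φ(f+g) = φ(f) + φ(g) for all nonnegative f, g ∈ C₀(Y) and φ(λf) = λφ(f) for all real λ ≥ 0 (with 0·∞ = 0). Assume that φ is densely defined, i.e. the set {f ∈ C₀(Y) : f ≥ 0 and φ(f) < ∞} is dense in the set of nonnegative elements of C₀(Y) for the uniform norm. Then φ(g) < ∞ for every nonnegative continuous compactly supported function g on Y. -/

import Mathlib

open scoped ENNReal ZeroAtInfty

/-!
Let `K` be the support of `g`. By Urysohn there is `H ∈ C₀(Y)` with `0 ≤ H` and `H = 1` on `K`,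
and density provides `f ≥ 0` with `φ f < ∞` and `‖H - f‖ < 1/2`, so `f ≥ 1/2` on `K`.
Hence `g ≤ (n + 1) • f` for some `n : ℕ`, and since additivity makes `φ` monotone on the
positive cone, `φ g ≤ (n + 1) * φ f < ∞`.
-/

namespace ZeroAtInftyContinuousMap

variable {Y : Type*} [TopologicalSpace Y]

lemma apply_le_norm (f : C₀(Y, ℝ)) (y : Y) : f y ≤ ‖f‖ :=
  norm_toBCF_eq_norm (f := f) ▸ f.toBCF.apply_le_norm y

lemma apply_sub_dist_le (f g : C₀(Y, ℝ)) (y : Y) : f y - dist f g ≤ g y := by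
  have h : dist (f y) (g y) ≤ dist f g :=
    dist_toBCF_eq_dist (f := f) ▸ f.toBCF.dist_coe_le_dist (g := g.toBCF) y
  rw [Real.dist_eq, abs_sub_le_iff] at h
  linarith [h.1]

lemma exists_nonneg_eqOn_one_of_isCompact [RegularSpace Y] [LocallyCompactSpace Y]
    {K : Set Y} (hK : IsCompact K) :
    ∃ H : C₀(Y, ℝ), (∀ y, 0 ≤ H y) ∧ Set.EqOn H 1 K := by
  obtain ⟨h, hK1, -, hc, h01⟩ :=
    exists_continuous_one_zero_of_isCompact hK isClosed_empty (Set.disjoint_empty K)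
  exact ⟨⟨h, hc.is_zero_at_infty⟩, fun y => (h01 y).1, hK1⟩

lemma exists_le_succ_nsmul_of_le_on_tsupport {f g : C₀(Y, ℝ)} {ε : ℝ} (hε : 0 < ε)
    (hf : ∀ y, 0 ≤ f y) (hεf : ∀ y ∈ tsupport g, ε ≤ f y) :
    ∃ n : ℕ, ∀ y, g y ≤ ((n + 1) • f) y := by
  refine ⟨⌈‖g‖ / ε⌉₊, fun y => ?_⟩
  rw [smul_apply, nsmul_eq_mul]
  by_cases hy : y ∈ tsupport g
  · have hn : ‖g‖ ≤ (⌈‖g‖ / ε⌉₊ + 1 : ℕ) * ε := by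
      rw [← div_le_iff₀ hε]
      exact (Nat.le_ceil _).trans (by push_cast; linarith)
    calc g y ≤ ‖g‖ := g.apply_le_norm y
      _ ≤ (⌈‖g‖ / ε⌉₊ + 1 : ℕ) * ε := hn
      _ ≤ (⌈‖g‖ / ε⌉₊ + 1 : ℕ) * f y := by gcongr; exact hεf y hy
  · rw [image_eq_zero_of_notMem_tsupport hy]
    exact mul_nonneg (Nat.cast_nonneg _) (hf y)

end ZeroAtInftyContinuousMap

section AdditiveOnPositiveCone

variable {Y : Type*} [TopologicalSpace Y] {φ : C₀(Y, ℝ) → ℝ≥0∞}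

lemma le_of_additive_of_le
    (hadd : ∀ f g : C₀(Y, ℝ), (∀ y, 0 ≤ f y) → (∀ y, 0 ≤ g y) → φ (f + g) = φ f + φ g)
    {f g : C₀(Y, ℝ)} (hf : ∀ y, 0 ≤ f y) (hfg : ∀ y, f y ≤ g y) :
    φ f ≤ φ g := by
  have hgf : ∀ y, 0 ≤ (g - f) y := fun y => sub_nonneg.mpr (hfg y)
  calc φ f ≤ φ f + φ (g - f) := le_self_add
    _ = φ g := by rw [← hadd f (g - f) hf hgf, add_sub_cancel]

lemma succ_nsmul_of_additive
    (hadd : ∀ f g : C₀(Y, ℝ), (∀ y, 0 ≤ f y) → (∀ y, 0 ≤ g y) → φ (f + g) = φ f + φ g)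
    {f : C₀(Y, ℝ)} (hf : ∀ y, 0 ≤ f y) (n : ℕ) :
    φ ((n + 1) • f) = (n + 1) * φ f := by
  induction n with
  | zero => simp
  | succ n ih =>
    have hnf : ∀ y, 0 ≤ ((n + 1) • f) y := fun y => by
      simpa using mul_nonneg (Nat.cast_nonneg (n + 1)) (hf y)
    rw [succ_nsmul, hadd _ _ hnf hf, ih]
    push_cast
    ring

end AdditiveOnPositiveCone

theorem weight_finite_on_compactly_supported_general
    {Y : Type*} [TopologicalSpace Y] [LocallyCompactSpace Y] [T2Space Y]
    (φ : C₀(Y, ℝ) → ℝ≥0∞)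
    (hadd : ∀ f g : C₀(Y, ℝ), (∀ y, 0 ≤ f y) → (∀ y, 0 ≤ g y) →
      φ (f + g) = φ f + φ g)
    (hdense : ∀ f : C₀(Y, ℝ), (∀ y, 0 ≤ f y) →
      f ∈ closure {g : C₀(Y, ℝ) | (∀ y, 0 ≤ g y) ∧ φ g < ∞})
    (g : C₀(Y, ℝ)) (hg : ∀ y, 0 ≤ g y) (hgc : HasCompactSupport fun y => g y) :
    φ g < ∞ := by
  obtain ⟨H, hH0, hH1⟩ := ZeroAtInftyContinuousMap.exists_nonneg_eqOn_one_of_isCompact hgc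
  obtain ⟨f, ⟨hf0, hf⟩, hHf⟩ := Metric.mem_closure_iff.mp (hdense H hH0) (1 / 2) one_half_pos
  have hf_half : ∀ y ∈ tsupport g, 1 / 2 ≤ f y := fun y hy => by
    have := H.apply_sub_dist_le f y
    rw [hH1 hy, Pi.one_apply] at this
    linarith
  obtain ⟨n, hgn⟩ :=
    ZeroAtInftyContinuousMap.exists_le_succ_nsmul_of_le_on_tsupport one_half_pos hf0 hf_half
  calc φ g ≤ φ ((n + 1) • f) := le_of_additive_of_le hadd hg hgn
    _ = (n + 1) * φ f := succ_nsmul_of_additive hadd hf0 n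
    _ < ∞ := ENNReal.mul_lt_top (by finiteness) hf

/-- Let `Y` be a locally compact Hausdorff space and let `φ` be an
additive, positively homogeneous `[0,∞]`-valued map on the nonnegative cone of
`C₀(Y)`.  If `φ` is densely defined, then `φ g < ∞` for every nonnegative continuous
compactly supported `g`. -/
theorem weight_finite_on_compactly_supported
    {Y : Type*} [TopologicalSpace Y] [LocallyCompactSpace Y] [T2Space Y]
    (φ : C₀(Y, ℝ) → ℝ≥0∞)
    (hadd : ∀ f g : C₀(Y, ℝ), (∀ y, 0 ≤ f y) → (∀ y, 0 ≤ g y) →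
      φ (f + g) = φ f + φ g)
    (hsmul : ∀ (r : ℝ) (f : C₀(Y, ℝ)), 0 ≤ r → (∀ y, 0 ≤ f y) →
      φ (r • f) = ENNReal.ofReal r * φ f)
    (hdense : ∀ f : C₀(Y, ℝ), (∀ y, 0 ≤ f y) →
      f ∈ closure {g : C₀(Y, ℝ) | (∀ y, 0 ≤ g y) ∧ φ g < ∞})
    (g : C₀(Y, ℝ)) (hg : ∀ y, 0 ≤ g y) (hgc : HasCompactSupport fun y => g y) :
    φ g < ∞ :=
  weight_finite_on_compactly_supported_general φ hadd hdense g hg hgc
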